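/- Let (c_n) be a sequence of nonnegative extended reals and define J_lower := liminf_{n→∞} (1/n) Σ_{k=0}^{n−1} c_k and m_α := (1−α) Σ_{n=0}^∞ α^n c_n for α ∈ (0,1). Then J_lower ≤ liminf_{α↑1} m_α. -/

import Mathlib

/-!
Write `S n = ∑_{k<n} c k` and `G = ∑ aⁿ = (1 - a)⁻¹`. The Cauchy product gives
`∑ aⁿ S (n+1) = G * ∑ aⁿ cₙ`, so the Abel mean equals `(1 - a)² ∑ aⁿ S (n+1)`. If `r n ≤ S n`
for `n ≥ N`, comparing with `∑ aⁿ (n+1) = G²` bounds the Abel mean below by `r aᴺ`, which tends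
to `r` as `a ↑ 1`.
-/

open Filter Topology Finset
open scoped ENNReal

namespace ENNReal

theorem tsum_mul_tsum_eq_tsum_sum_antidiagonal {A : Type*} [AddCommMonoid A] [HasAntidiagonal A]
    (f g : A → ℝ≥0∞) :
    (∑' n, f n) * ∑' n, g n = ∑' n, ∑ kl ∈ antidiagonal n, f kl.1 * g kl.2 := by
  calc (∑' n, f n) * ∑' n, g n = ∑' p : A × A, f p.1 * g p.2 := by
        rw [ENNReal.tsum_prod (f := fun a b => f a * g b), ← ENNReal.tsum_mul_right]
        exact tsum_congr fun k => ENNReal.tsum_mul_left.symm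
    _ = ∑' x : Σ n : A, antidiagonal n, f x.2.1.1 * g x.2.1.2 :=
        (HasAntidiagonal.sigmaAntidiagonalEquivProd.tsum_eq (fun p : A × A => f p.1 * g p.2)).symm
    _ = ∑' n, ∑ kl ∈ antidiagonal n, f kl.1 * g kl.2 := by
        rw [ENNReal.tsum_sigma']
        exact tsum_congr fun n => Finset.tsum_subtype (antidiagonal n) fun kl => f kl.1 * g kl.2

theorem tsum_pow_mul_sum_range_succ (a : ℝ≥0∞) (c : ℕ → ℝ≥0∞) :
    ∑' n, a ^ n * ∑ k ∈ range (n + 1), c k = (∑' n, a ^ n) * ∑' n, a ^ n * c n := by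
  rw [mul_comm, tsum_mul_tsum_eq_tsum_sum_antidiagonal]
  refine tsum_congr fun n => ?_
  rw [← Nat.sum_antidiagonal_eq_sum_range_succ (fun k _ => c k), mul_sum]
  refine sum_congr rfl fun kl hkl => ?_
  rw [← mem_antidiagonal.mp hkl, pow_add]
  ring

theorem tsum_pow_mul_add_one (a : ℝ≥0∞) :
    ∑' n : ℕ, a ^ n * (n + 1) = (∑' n, a ^ n) ^ 2 := by
  simpa [sq] using tsum_pow_mul_sum_range_succ a 1

theorem one_sub_mul_tsum_geometric {a : ℝ≥0∞} (ha : a < 1) : (1 - a) * ∑' n, a ^ n = 1 := by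
  rw [ENNReal.tsum_geometric]
  exact ENNReal.mul_inv_cancel (tsub_pos_of_lt ha).ne' (tsub_le_self.trans_lt one_lt_top).ne

theorem mul_pow_mul_tsum_geometric_sq_le {a r : ℝ≥0∞} {s : ℕ → ℝ≥0∞} {N : ℕ}
    (hs : ∀ n ≥ N, r * (n + 1) ≤ s n) :
    r * a ^ N * (∑' n, a ^ n) ^ 2 ≤ ∑' n, a ^ n * s n :=
  calc r * a ^ N * (∑' n, a ^ n) ^ 2 = ∑' m : ℕ, a ^ (m + N) * (r * (m + 1)) := by
        rw [← tsum_pow_mul_add_one, ← ENNReal.tsum_mul_left]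
        exact tsum_congr fun m => by ring
    _ ≤ ∑' m, a ^ (m + N) * s (m + N) := by
        gcongr with m
        refine le_trans ?_ (hs (m + N) (Nat.le_add_left N m))
        gcongr
        exact_mod_cast Nat.le_add_right m N
    _ ≤ ∑' n, a ^ n * s n :=
        tsum_comp_le_tsum_of_injective (add_left_injective N) (fun n => a ^ n * s n)

theorem mul_pow_le_one_sub_mul_tsum {a r : ℝ≥0∞} {c : ℕ → ℝ≥0∞} {N : ℕ} (ha : a < 1)
    (hN : ∀ n ≥ N, r * n ≤ ∑ k ∈ range n, c k) :
    r * a ^ N ≤ (1 - a) * ∑' n, a ^ n * c n := by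
  have hG := one_sub_mul_tsum_geometric ha
  have hS : ∀ n ≥ N, r * (n + 1) ≤ ∑ k ∈ range (n + 1), c k := fun n hn => by
    exact_mod_cast hN (n + 1) (by omega)
  calc r * a ^ N = (1 - a) ^ 2 * (r * a ^ N * (∑' n, a ^ n) ^ 2) := by
        rw [mul_left_comm, ← mul_pow, hG, one_pow, mul_one]
    _ ≤ (1 - a) ^ 2 * ∑' n, a ^ n * ∑ k ∈ range (n + 1), c k := by
        gcongr
        exact mul_pow_mul_tsum_geometric_sq_le hS
    _ = (1 - a) * ∑' n, a ^ n * c n := by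
        rw [tsum_pow_mul_sum_range_succ, sq, mul_mul_mul_comm, hG, one_mul]

end ENNReal

theorem stmt_11 (c : ℕ → ℝ≥0∞) :
    Filter.atTop.liminf (fun n : ℕ => (∑ k ∈ Finset.range n, c k) / (n : ℝ≥0∞))
    ≤ Filter.liminf
      (fun α : ℝ => (1 - ENNReal.ofReal α) * ∑' n : ℕ, (ENNReal.ofReal α) ^ n * c n)
      (nhdsWithin 1 (Set.Ioo (0:ℝ) 1)) := by
  refine le_of_forall_lt_imp_le_of_dense fun r hr => ?_
  obtain ⟨N, hN⟩ := (eventually_lt_of_lt_liminf hr).exists_forall_of_atTop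
  have hlower : ∀ α ∈ Set.Ioo (0 : ℝ) 1, r * ENNReal.ofReal α ^ N
      ≤ (1 - ENNReal.ofReal α) * ∑' n : ℕ, ENNReal.ofReal α ^ n * c n := fun α hα =>
    ENNReal.mul_pow_le_one_sub_mul_tsum (ENNReal.ofReal_lt_one.mpr hα.2)
      fun n hn => ENNReal.mul_le_of_le_div (hN n hn).le
  have hlim : Tendsto (fun α : ℝ => r * ENNReal.ofReal α ^ N) (𝓝[Set.Ioo 0 1] 1) (𝓝 r) := by
    have := ENNReal.Tendsto.const_mul
      (ENNReal.Tendsto.pow (ENNReal.continuous_ofReal.tendsto 1) (n := N))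
      (Or.inl (by simp)) (a := r)
    simpa using this.mono_left nhdsWithin_le_nhds
  have : (𝓝[Set.Ioo (0 : ℝ) 1] 1).NeBot := right_nhdsWithin_Ioo_neBot (by norm_num)
  calc r = liminf (fun α : ℝ => r * ENNReal.ofReal α ^ N) (𝓝[Set.Ioo 0 1] 1) :=
        hlim.liminf_eq.symm
    _ ≤ _ := liminf_le_liminf (eventually_mem_nhdsWithin.mono hlower)
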